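/- For any string w with at most two runs of the form α^l β^r (α ≠ β characters, l, r ≥ 0) and any string u of length k, the Levenshtein distance ℓ(u, w) can be written as f₁ + min f₂, where f₁ = max(k − l − r, 0) and the minimum of f₂(i) = max(l − N_α(u_(i)), 0) + max(r − N_β(u^(k−i)), 0) is taken over max(0, min(l, k−r)) ≤ i ≤ min(k, max(l, k−r)). -/

import Mathlib

/-- The cost functions for the Levenshtein distance (removed from Mathlib; restored verbatim
in meaning from `Mathlib/Data/List/EditDistance/Defs.lean`). -/
structure Levenshtein.Cost (α β δ : Type*) where
  /-- Cost to delete an element from a list. -/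
  delete : α → δ
  /-- Cost to insert an element into a list. -/
  insert : β → δ
  /-- Cost to substitute one element for another in a list. -/
  substitute : α → β → δ

/-- The default cost structure, for which all operations cost `1`, except substituting an
element by itself. -/
def Levenshtein.defaultCost {α : Type*} [DecidableEq α] : Levenshtein.Cost α α ℕ where
  delete _ := 1
  insert _ := 1
  substitute a b := if a = b then 0 else 1

/-- (Implementation detail of the old Mathlib definition.) -/
def Levenshtein.impl {α β δ : Type*} [AddZeroClass δ] [Min δ]
    (C : Levenshtein.Cost α β δ) (xs : List α) (y : β) (d : {r : List δ // 0 < r.length}) :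
    {r : List δ // 0 < r.length} :=
  let ⟨ds, w⟩ := d
  xs.zip (ds.zip ds.tail) |>.foldr
    (init := ⟨[C.insert y + ds.getLast (List.length_pos_iff.mp w)], by simp⟩)
    (fun ⟨x, d₀, d₁⟩ ⟨r, w⟩ =>
      ⟨min (C.delete x + r[0]) (min (C.insert y + d₀) (C.substitute x y + d₁)) :: r, by simp⟩)

/-- `suffixLevenshtein C xs ys` computes the Levenshtein distance from each suffix of `xs`
to `ys`. -/
def suffixLevenshtein {α β δ : Type*} [AddZeroClass δ] [Min δ]
    (C : Levenshtein.Cost α β δ) (xs : List α) (ys : List β) :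
    {r : List δ // 0 < r.length} :=
  ys.foldr
    (Levenshtein.impl C xs)
    (xs.foldr (init := ⟨[0], by simp⟩) (fun a ⟨ds, w⟩ => ⟨(C.delete a + ds[0]) :: ds, by simp⟩))

/-- The Levenshtein distance from `xs` to `ys` with cost structure `C`. -/
def levenshtein {α β δ : Type*} [AddZeroClass δ] [Min δ]
    (C : Levenshtein.Cost α β δ) (xs : List α) (ys : List β) : δ :=
  let ⟨r, w⟩ := suffixLevenshtein C xs ys
  r[0]


/-!
An optimal edit of `u` into `v ++ w` cuts `u` into a prefix edited into `v` and a suffix edited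
into `w`, so `ℓ(u, α^l β^r)` is the least split cost `ℓ(u_(i), α^l) + ℓ(u^(k-i), β^r)` over
`i ≤ k`. Against a single run, `ℓ(v, α^l) = max(|v| - l, 0) + max(l - N_α(v), 0)`, so the
split cost is `max(i - l, 0) + max(k - i - r, 0) + f₂(i)`. Moving the cut one letter to the
right changes each count by at most one, so the split cost is nonincreasing up to
`min(l, k - r)` and nondecreasing from `max(l, k - r)` on, while in between the two length
terms add up to `f₁`.
-/

open Levenshtein

section EditDistance

variable {α β δ : Type*}

namespace Levenshtein

variable [AddZeroClass δ] [Min δ] (C : Cost α β δ)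

theorem impl_cons (x : α) (xs : List α) (y : β) (d₀ d₁ : δ) (ds : List δ)
    (w : 0 < (d₀ :: d₁ :: ds).length) :
    (impl C (x :: xs) y ⟨d₀ :: d₁ :: ds, w⟩).1 =
      min (C.delete x + (impl C xs y ⟨d₁ :: ds, by simp⟩).1[0]'(impl C xs y _).2)
          (min (C.insert y + d₀) (C.substitute x y + d₁)) ::
        (impl C xs y ⟨d₁ :: ds, by simp⟩).1 :=
  rfl

theorem length_impl (xs : List α) (y : β) (d : {r : List δ // 0 < r.length})
    (hd : d.1.length = xs.length + 1) : (impl C xs y d).1.length = xs.length + 1 := by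
  induction xs generalizing d with
  | nil =>
    obtain ⟨_ | ⟨d₀, _ | _⟩, _⟩ := d <;> simp_all
    rfl
  | cons x xs ih =>
    obtain ⟨_ | ⟨d₀, _ | ⟨d₁, ds⟩⟩, _⟩ := d <;> simp at hd
    rw [impl_cons, List.length_cons, ih _ (by simpa using hd), List.length_cons]

theorem length_suffixLevenshtein (xs : List α) (ys : List β) :
    (suffixLevenshtein C xs ys).1.length = xs.length + 1 := by
  induction ys with
  | nil =>
    induction xs with
    | nil => rfl
    | cons x xs ih => exact congrArg (· + 1) ih
  | cons y ys ih => exact length_impl C xs y _ ih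

theorem tail_impl_cons (x : α) (xs : List α) (y : β) (d e : {r : List δ // 0 < r.length})
    (h : d.1.tail = e.1) : (impl C (x :: xs) y d).1.tail = (impl C xs y e).1 := by
  obtain ⟨_ | ⟨d₀, ds⟩, hd⟩ := d
  · simp at hd
  obtain ⟨_ | ⟨e₀, es⟩, he⟩ := e
  · simp at he
  simp only [List.tail_cons] at h
  subst h
  rfl

theorem tail_suffixLevenshtein_cons (x : α) (xs : List α) (ys : List β) :
    (suffixLevenshtein C (x :: xs) ys).1.tail = (suffixLevenshtein C xs ys).1 := by
  induction ys with
  | nil => rfl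
  | cons y ys ih => exact tail_impl_cons C x xs y _ _ ih

theorem suffixLevenshtein_cons (x : α) (xs : List α) (ys : List β) :
    (suffixLevenshtein C (x :: xs) ys).1 =
      levenshtein C (x :: xs) ys :: (suffixLevenshtein C xs ys).1 := by
  rw [← tail_suffixLevenshtein_cons C x xs ys]
  change _ = (suffixLevenshtein C (x :: xs) ys).1[0]'(suffixLevenshtein C (x :: xs) ys).2 :: _
  generalize suffixLevenshtein C (x :: xs) ys = S
  obtain ⟨_ | ⟨t, S⟩, h⟩ := S
  · simp at h
  · rfl

end Levenshtein

section Equations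

variable [AddZeroClass δ] [Min δ] (C : Cost α β δ)

@[simp] theorem levenshtein_nil_nil : levenshtein C ([] : List α) ([] : List β) = 0 := rfl

@[simp] theorem levenshtein_cons_nil (x : α) (xs : List α) :
    levenshtein C (x :: xs) ([] : List β) = C.delete x + levenshtein C xs [] := rfl

@[simp] theorem levenshtein_nil_cons (y : β) (ys : List β) :
    levenshtein C ([] : List α) (y :: ys) = C.insert y + levenshtein C [] ys := by
  have h := length_suffixLevenshtein C ([] : List α) ys
  change (impl C [] y (suffixLevenshtein C [] ys)).1[0]'(impl C [] y _).2 =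
    C.insert y + (suffixLevenshtein C [] ys).1[0]'(suffixLevenshtein C [] ys).2
  generalize suffixLevenshtein C [] ys = S at h ⊢
  obtain ⟨_ | ⟨d, _ | _⟩, _⟩ := S <;> simp at h
  rfl

theorem levenshtein_cons_cons (x : α) (xs : List α) (y : β) (ys : List β) :
    levenshtein C (x :: xs) (y :: ys) =
      min (C.delete x + levenshtein C xs (y :: ys))
        (min (C.insert y + levenshtein C (x :: xs) ys)
          (C.substitute x y + levenshtein C xs ys)) := by
  have h := suffixLevenshtein_cons C x xs ys
  have hl := length_suffixLevenshtein C xs ys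
  change (impl C (x :: xs) y (suffixLevenshtein C (x :: xs) ys)).1[0]'(impl C _ y _).2 =
    min (C.delete x + (impl C xs y (suffixLevenshtein C xs ys)).1[0]'(impl C _ y _).2)
      (min (C.insert y + levenshtein C (x :: xs) ys)
        (C.substitute x y + (suffixLevenshtein C xs ys).1[0]'(suffixLevenshtein C xs ys).2))
  generalize levenshtein C (x :: xs) ys = t at h ⊢
  generalize suffixLevenshtein C (x :: xs) ys = S at h ⊢
  generalize suffixLevenshtein C xs ys = T at h hl ⊢
  obtain ⟨S, hS⟩ := S
  obtain ⟨_ | ⟨d₁, ds⟩, hT⟩ := T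
  · simp at hT
  dsimp only at h
  subst h
  rfl

end Equations

section Splitting

section LinearOrder

variable [AddZeroClass δ] [LinearOrder δ] (C : Cost α β δ)

theorem levenshtein_cons_left_le (x : α) (xs : List α) (ys : List β) :
    levenshtein C (x :: xs) ys ≤ C.delete x + levenshtein C xs ys := by
  cases ys with
  | nil => exact (levenshtein_cons_nil C x xs).le
  | cons y ys => exact (levenshtein_cons_cons C x xs y ys).trans_le (min_le_left _ _)

theorem levenshtein_cons_right_le (xs : List α) (y : β) (ys : List β) :
    levenshtein C xs (y :: ys) ≤ C.insert y + levenshtein C xs ys := by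
  cases xs with
  | nil => exact (levenshtein_nil_cons C y ys).le
  | cons x xs =>
    exact (levenshtein_cons_cons C x xs y ys).trans_le ((min_le_right _ _).trans (min_le_left _ _))

theorem levenshtein_cons_cons_le (x : α) (xs : List α) (y : β) (ys : List β) :
    levenshtein C (x :: xs) (y :: ys) ≤ C.substitute x y + levenshtein C xs ys :=
  (levenshtein_cons_cons C x xs y ys).trans_le ((min_le_right _ _).trans (min_le_right _ _))

end LinearOrder

theorem levenshtein_nil_append [AddMonoid δ] [Min δ] (C : Cost α β δ) (v w : List β) :
    levenshtein C ([] : List α) (v ++ w) = levenshtein C [] v + levenshtein C [] w := by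
  induction v with
  | nil => simp
  | cons y v ih => simp only [List.cons_append, levenshtein_nil_cons, ih, add_assoc]

variable [AddCommMonoid δ] [LinearOrder δ] [IsOrderedAddMonoid δ] (C : Cost α β δ)

theorem levenshtein_append_le (u₁ u₂ : List α) (v w : List β) :
    levenshtein C (u₁ ++ u₂) (v ++ w) ≤ levenshtein C u₁ v + levenshtein C u₂ w := by
  induction u₁ generalizing v with
  | nil =>
    induction v with
    | nil => simp
    | cons y v ih =>
      calc levenshtein C ([] ++ u₂) (y :: v ++ w)
          ≤ C.insert y + levenshtein C u₂ (v ++ w) := levenshtein_cons_right_le C _ y _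
        _ ≤ C.insert y + (levenshtein C [] v + levenshtein C u₂ w) := by gcongr; simpa using ih
        _ = _ := by rw [levenshtein_nil_cons, add_assoc]
  | cons x u₁ ihu =>
    induction v with
    | nil =>
      calc levenshtein C (x :: (u₁ ++ u₂)) w
          ≤ C.delete x + levenshtein C (u₁ ++ u₂) w := levenshtein_cons_left_le C x _ _
        _ ≤ C.delete x + (levenshtein C u₁ [] + levenshtein C u₂ w) := by
          gcongr; simpa using ihu []
        _ = _ := by rw [levenshtein_cons_nil, add_assoc]
    | cons y v ihv =>
      rw [List.cons_append, List.cons_append, levenshtein_cons_cons, levenshtein_cons_cons,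
        ← min_add_add_right, ← min_add_add_right, add_assoc, add_assoc, add_assoc]
      exact min_le_min (by gcongr; exact ihu (y :: v))
        (min_le_min (by gcongr; simpa using ihv) (by gcongr; exact ihu v))

theorem exists_levenshtein_split_le (u : List α) (v w : List β) :
    ∃ i ≤ u.length,
      levenshtein C (u.take i) v + levenshtein C (u.drop i) w ≤ levenshtein C u (v ++ w) := by
  induction u generalizing v with
  | nil => exact ⟨0, le_rfl, by simp [levenshtein_nil_append]⟩
  | cons x u ihu =>
    induction v with
    | nil => exact ⟨0, Nat.zero_le _, by simp⟩
    | cons y v ihv =>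
      have extend (c : δ) {s t q m : δ} (hs : s ≤ c + t) (ht : t + q ≤ m) : s + q ≤ c + m :=
        calc s + q ≤ c + t + q := by gcongr
          _ = c + (t + q) := add_assoc c t q
          _ ≤ c + m := by gcongr
      obtain ⟨i₁, hi₁, h₁⟩ := ihu (y :: v)
      obtain ⟨i₂, hi₂, h₂⟩ := ihv
      obtain ⟨i₃, hi₃, h₃⟩ := ihu v
      rw [List.cons_append, levenshtein_cons_cons]
      rcases min_choice (C.delete x + levenshtein C u (y :: (v ++ w)))
          (min (C.insert y + levenshtein C (x :: u) (v ++ w))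
            (C.substitute x y + levenshtein C u (v ++ w))) with h | h <;> rw [h]
      · exact ⟨i₁ + 1, Nat.succ_le_succ hi₁, extend _ (levenshtein_cons_left_le C x _ _) h₁⟩
      rcases min_choice (C.insert y + levenshtein C (x :: u) (v ++ w))
          (C.substitute x y + levenshtein C u (v ++ w)) with h | h <;> rw [h]
      · exact ⟨i₂, hi₂, extend _ (levenshtein_cons_right_le C _ y v) h₂⟩
      · exact ⟨i₃ + 1, Nat.succ_le_succ hi₃, extend _ (levenshtein_cons_cons_le C x _ _ _) h₃⟩

theorem isLeast_levenshtein_append (u : List α) (v w : List β) :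
    IsLeast
      ((fun i ↦ levenshtein C (u.take i) v + levenshtein C (u.drop i) w) '' Set.Iic u.length)
      (levenshtein C u (v ++ w)) := by
  have split_le (i : ℕ) : levenshtein C u (v ++ w) ≤
      levenshtein C (u.take i) v + levenshtein C (u.drop i) w := by
    simpa using levenshtein_append_le C (u.take i) (u.drop i) v w
  obtain ⟨i, hi, h⟩ := exists_levenshtein_split_le C u v w
  exact ⟨⟨i, hi, (split_le i).antisymm' h⟩, by rintro _ ⟨i, -, rfl⟩; exact split_le i⟩

end Splitting

end EditDistance

theorem exists_mem_Icc_le_of_antitoneOn_of_monotoneOn {γ ε : Type*} [LinearOrder γ] [Preorder ε]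
    {f : γ → ε} {a b c x : γ} (hab : a ≤ b) (hxc : x ≤ c)
    (hanti : AntitoneOn f (Set.Iic a)) (hmono : MonotoneOn f (Set.Icc b c)) :
    ∃ y ∈ Set.Icc a b, f y ≤ f x := by
  rcases lt_or_ge x a with hxa | hax
  · exact ⟨a, ⟨le_rfl, hab⟩, hanti (Set.mem_Iic.2 hxa.le) (Set.mem_Iic.2 le_rfl) hxa.le⟩
  rcases le_or_gt x b with hxb | hbx
  · exact ⟨x, ⟨hax, hxb⟩, le_rfl⟩
  · exact ⟨b, ⟨hab, le_rfl⟩, hmono ⟨le_rfl, hbx.le.trans hxc⟩ ⟨hbx.le, hxc⟩ hbx.le⟩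

section Runs

variable {A : Type*} [DecidableEq A]

theorem List.count_take_add_one_le (u : List A) (a : A) (i : ℕ) :
    (u.take (i + 1)).count a ≤ (u.take i).count a + 1 := by
  rw [List.take_add_one, List.count_append]
  gcongr
  exact List.count_le_length.trans (by cases u[i]? <;> simp)

theorem List.count_drop_le_count_drop_add_one (u : List A) (a : A) (i : ℕ) :
    (u.drop i).count a ≤ (u.drop (i + 1)).count a + 1 := by
  rw [← List.tail_drop]
  cases u.drop i with
  | nil => simp
  | cons x l => rw [List.tail_cons, List.count_cons]; split <;> omega

theorem levenshtein_replicate (u : List A) (a : A) (l : ℕ) :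
    levenshtein defaultCost u (List.replicate l a) = (u.length - l) + (l - u.count a) := by
  induction u generalizing l with
  | nil =>
    induction l with
    | zero => rfl
    | succ l ih => rw [List.replicate_succ, levenshtein_nil_cons, ih]; simp [defaultCost]; omega
  | cons x u ih =>
    induction l with
    | zero =>
      have h := ih 0
      rw [List.replicate_zero] at h ⊢
      rw [levenshtein_cons_nil, h]
      simp [defaultCost]
      omega
    | succ l ihl =>
      rw [List.replicate_succ, levenshtein_cons_cons, ← List.replicate_succ, ih, ihl, ih]
      have := List.count_le_length (a := a) (l := u)
      by_cases hxa : x = a <;> simp [defaultCost, hxa] <;> omega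

def twoRunsSplitCost (u : List A) (a b : A) (l r i : ℕ) : ℕ :=
  levenshtein defaultCost (u.take i) (List.replicate l a) +
    levenshtein defaultCost (u.drop i) (List.replicate r b)

section TwoRuns

variable (u : List A) (a b : A) (l r : ℕ) {i : ℕ}

theorem twoRunsSplitCost_eq (hi : i ≤ u.length) :
    twoRunsSplitCost u a b l r i =
      (i - l) + (l - (u.take i).count a) + ((u.length - i) - r) + (r - (u.drop i).count b) := by
  rw [twoRunsSplitCost, levenshtein_replicate, levenshtein_replicate, List.length_take,
    List.length_drop, min_eq_left hi]
  omega

theorem twoRunsSplitCost_succ_le (hi : i + 1 ≤ min l (u.length - r)) :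
    twoRunsSplitCost u a b l r (i + 1) ≤ twoRunsSplitCost u a b l r i := by
  have hiu : i < u.length := by omega
  rw [twoRunsSplitCost_eq u a b l r (i := i + 1) hiu, twoRunsSplitCost_eq u a b l r hiu.le]
  have := (List.take_sublist_take_left (l := u) (Nat.le_add_right i 1)).count_le a
  have := List.count_take_add_one_le u a i
  have := (u.drop_sublist_drop_left (Nat.le_add_right i 1)).count_le b
  have := List.count_drop_le_count_drop_add_one u b i
  omega

theorem twoRunsSplitCost_le_succ (hi : max l (u.length - r) ≤ i) (hiu : i < u.length) :
    twoRunsSplitCost u a b l r i ≤ twoRunsSplitCost u a b l r (i + 1) := by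
  rw [twoRunsSplitCost_eq u a b l r (i := i + 1) hiu, twoRunsSplitCost_eq u a b l r hiu.le]
  have := (List.take_sublist_take_left (l := u) (Nat.le_add_right i 1)).count_le a
  have := List.count_take_add_one_le u a i
  have := (u.drop_sublist_drop_left (Nat.le_add_right i 1)).count_le b
  have := List.count_drop_le_count_drop_add_one u b i
  omega

theorem antitoneOn_twoRunsSplitCost :
    AntitoneOn (twoRunsSplitCost u a b l r) (Set.Iic (min l (u.length - r))) :=
  antitoneOn_of_succ_le Set.ordConnected_Iic fun i _ _ hi ↦ by
    simpa using twoRunsSplitCost_succ_le u a b l r (by simpa using hi)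

theorem monotoneOn_twoRunsSplitCost :
    MonotoneOn (twoRunsSplitCost u a b l r)
      (Set.Icc (min u.length (max l (u.length - r))) u.length) :=
  monotoneOn_of_le_succ Set.ordConnected_Icc fun i _ hi hi' ↦ by
    simp only [Order.succ_eq_add_one, Set.mem_Icc] at hi hi'
    exact twoRunsSplitCost_le_succ u a b l r (by omega) (by omega)

theorem twoRunsSplitCost_eq_of_mem_Icc
    (hi : i ∈ Set.Icc (min l (u.length - r)) (min u.length (max l (u.length - r)))) :
    twoRunsSplitCost u a b l r i =
      (u.length - l - r) + ((l - (u.take i).count a) + (r - (u.drop i).count b)) := by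
  rw [twoRunsSplitCost_eq u a b l r (hi.2.trans (min_le_left _ _))]
  obtain ⟨h₁, h₂⟩ := hi
  omega

end TwoRuns

end Runs

theorem lev_to_two_runs_f1_f2_general {A : Type*} [DecidableEq A] (u : List A) (k l r : ℕ)
    (hk : u.length = k) (a b : A) :
    levenshtein Levenshtein.defaultCost u (List.replicate l a ++ List.replicate r b) =
      (k - l - r) +
      sInf {x : ℕ | ∃ i : ℕ, max 0 (min l (k - r)) ≤ i ∧ i ≤ min k (max l (k - r)) ∧
        x = (l - (u.take i).count a) + (r - (u.drop i).count b)} := by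
  subst hk
  obtain ⟨⟨i₀, hi₀, hcost⟩, hleast⟩ :
      IsLeast (twoRunsSplitCost u a b l r '' Set.Iic u.length)
        (levenshtein defaultCost u (List.replicate l a ++ List.replicate r b)) :=
    isLeast_levenshtein_append defaultCost u (List.replicate l a) (List.replicate r b)
  obtain ⟨j, hj, hji₀⟩ := exists_mem_Icc_le_of_antitoneOn_of_monotoneOn (by omega) hi₀
    (antitoneOn_twoRunsSplitCost u a b l r) (monotoneOn_twoRunsSplitCost u a b l r)
  have hj_eq : twoRunsSplitCost u a b l r j =
      levenshtein defaultCost u (List.replicate l a ++ List.replicate r b) :=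
    (hji₀.trans_eq hcost).antisymm (hleast ⟨j, hj.2.trans (min_le_left _ _), rfl⟩)
  rw [IsLeast.csInf_eq (a := (l - (u.take j).count a) + (r - (u.drop j).count b)),
    ← twoRunsSplitCost_eq_of_mem_Icc u a b l r hj, hj_eq]
  refine ⟨⟨j, by simpa using hj.1, hj.2, rfl⟩, ?_⟩
  rintro _ ⟨i, hi₁, hi₂, rfl⟩
  have := hleast ⟨i, hi₂.trans (min_le_left _ _), rfl⟩
  rw [← hj_eq, twoRunsSplitCost_eq_of_mem_Icc u a b l r hj,
    twoRunsSplitCost_eq_of_mem_Icc u a b l r ⟨by simpa using hi₁, hi₂⟩] at this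
  exact Nat.le_of_add_le_add_left this

/-- `ℓ(u, α^l β^r) = f₁ + min f₂` where `f₁ = max (k−l−r) 0` and
`f₂ i = max (l − N_α(u_(i))) 0 + max (r − N_β(u^(k−i))) 0`, the minimum taken over
`max 0 (min l (k−r)) ≤ i ≤ min k (max l (k−r))`.  (Here `ℕ`-subtraction is truncated,
so `x - y = max (x - y) 0`.) -/
theorem lev_to_two_runs_f1_f2 {A : Type*} [DecidableEq A] (u : List A) (k l r : ℕ)
    (hk : u.length = k) (a b : A) (hab : a ≠ b) :
    levenshtein Levenshtein.defaultCost u (List.replicate l a ++ List.replicate r b) =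
      (k - l - r) +
      sInf {x : ℕ | ∃ i : ℕ, max 0 (min l (k - r)) ≤ i ∧ i ≤ min k (max l (k - r)) ∧
        x = (l - (u.take i).count a) + (r - (u.drop i).count b)} :=
  lev_to_two_runs_f1_f2_general u k l r hk a b
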